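/- arXiv:2605.08863 — 3 statements merged into one kernel-verified Lean document; each statement's English description precedes it below -/
import Mathlib

section
/- Let J be a finite, nonempty set of channels, let T ≥ 1 and s ≥ 1 be natural numbers, and let H be a real inner product space. For each j ∈ J let S_j be a nonempty finite set of instances with |S_j| ≤ s, let u_{i,j} ∈ ℝ, g_{i,j} ∈ H for i ∈ S_j, let w_j ∈ ℝ, and let i*_j ∈ S_j. Suppose 0 < u_min ≤ |u_{i,j}| ≤ u_max and 0 < g_min ≤ ‖g_{i,j}‖ ≤ g_max for all j ∈ J, i ∈ S_j. Define γ_j^max = u_{i*_j, j}² + w_j²·‖g_{i*_j, j}‖² and γ_j^mean = ( (1/T)·Σ_{i∈S_j} u_{i,j} )² + (w_j²/T²)·‖Σ_{i∈S_j} g_{i,j}‖². Then Σ_{j∈J} γ_j^mean ≤ (c₂/c₁)·(s/T)²·Σ_{j∈J} γ_j^max, where c₁ = min(u_min², g_min²) and c₂ = max(u_max², g_max²). -/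
/-- Max- vs mean-pooling gradient-norm comparison (Theorem `sparse`): under the
sparse-MIL two-sided bounds `0 < u_min ≤ |u_{i,j}| ≤ u_max` and
`0 < g_min ≤ ‖g_{i,j}‖ ≤ g_max` on active instances, with `|S_j| ≤ s` and bag
size `T`, one has `∑_j γ_j^mean ≤ (c₂/c₁)·(s/T)²·∑_j γ_j^max`, where
`γ_j^max = u_{i*_j,j}² + w_j²·‖g_{i*_j,j}‖²` for a chosen `i*_j ∈ S_j`,
`c₁ = min(u_min², g_min²)` and `c₂ = max(u_max², g_max²)`. -/
theorem stmt7 {ι κ H : Type*} [NormedAddCommGroup H] [InnerProductSpace ℝ H]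
    (J : Finset ι) (hJ : J.Nonempty) (T s : ℕ) (hT : 1 ≤ T) (hs : 1 ≤ s)
    (S : ι → Finset κ) (hSne : ∀ j ∈ J, (S j).Nonempty)
    (hS : ∀ j ∈ J, (S j).card ≤ s)
    (u : κ → ι → ℝ) (g : κ → ι → H) (w : ι → ℝ)
    (istar : ι → κ) (histar : ∀ j ∈ J, istar j ∈ S j)
    (umin umax gmin gmax : ℝ) (humin : 0 < umin) (hgmin : 0 < gmin)
    (hu : ∀ j ∈ J, ∀ i ∈ S j, umin ≤ |u i j| ∧ |u i j| ≤ umax)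
    (hg : ∀ j ∈ J, ∀ i ∈ S j, gmin ≤ ‖g i j‖ ∧ ‖g i j‖ ≤ gmax) :
    ∑ j ∈ J, (((1 / (T : ℝ)) * ∑ i ∈ S j, u i j) ^ 2 +
        ((w j) ^ 2 / (T : ℝ) ^ 2) * ‖∑ i ∈ S j, g i j‖ ^ 2) ≤
      (max (umax ^ 2) (gmax ^ 2) / min (umin ^ 2) (gmin ^ 2)) *
        ((s : ℝ) / (T : ℝ)) ^ 2 *
        ∑ j ∈ J, ((u (istar j) j) ^ 2 + (w j) ^ 2 * ‖g (istar j) j‖ ^ 2) := by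
  have hc1pos : (0:ℝ) < min (umin ^ 2) (gmin ^ 2) :=
    lt_min (pow_pos humin 2) (pow_pos hgmin 2)
  have hTpos : (0:ℝ) < (T : ℝ) := by exact_mod_cast hT
  have hT2 : (0:ℝ) < (T : ℝ) ^ 2 := pow_pos hTpos 2
  rw [Finset.mul_sum]
  apply Finset.sum_le_sum
  intro j hj
  set c1 := min (umin ^ 2) (gmin ^ 2) with hc1
  set c2 := max (umax ^ 2) (gmax ^ 2) with hc2
  obtain ⟨hust, hust'⟩ := hu j hj (istar j) (histar j hj)
  obtain ⟨hgst, hgst'⟩ := hg j hj (istar j) (histar j hj)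
  have humax : (0:ℝ) < umax := lt_of_lt_of_le humin (hust.trans hust')
  have hgmax : (0:ℝ) < gmax := lt_of_lt_of_le hgmin (hgst.trans hgst')
  -- bound |sum u|
  have hA : |∑ i ∈ S j, u i j| ≤ (s : ℝ) * umax := by
    calc |∑ i ∈ S j, u i j| ≤ ∑ i ∈ S j, |u i j| := Finset.abs_sum_le_sum_abs _ _
      _ ≤ (S j).card • umax := Finset.sum_le_card_nsmul _ _ _ (fun i hi => (hu j hj i hi).2)
      _ = ((S j).card : ℝ) * umax := by rw [nsmul_eq_mul]
      _ ≤ (s : ℝ) * umax := by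
          apply mul_le_mul_of_nonneg_right _ humax.le
          exact_mod_cast hS j hj
  have hG : ‖∑ i ∈ S j, g i j‖ ≤ (s : ℝ) * gmax := by
    calc ‖∑ i ∈ S j, g i j‖ ≤ ∑ i ∈ S j, ‖g i j‖ := norm_sum_le _ _
      _ ≤ (S j).card • gmax := Finset.sum_le_card_nsmul _ _ _ (fun i hi => (hg j hj i hi).2)
      _ = ((S j).card : ℝ) * gmax := by rw [nsmul_eq_mul]
      _ ≤ (s : ℝ) * gmax := by
          apply mul_le_mul_of_nonneg_right _ hgmax.le
          exact_mod_cast hS j hj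
  have hA2 : (∑ i ∈ S j, u i j) ^ 2 ≤ (s : ℝ) ^ 2 * umax ^ 2 := by
    have := sq_le_sq' (neg_le_of_abs_le hA) (le_of_abs_le hA)
    nlinarith
  have hG2 : ‖∑ i ∈ S j, g i j‖ ^ 2 ≤ (s : ℝ) ^ 2 * gmax ^ 2 := by
    nlinarith [norm_nonneg (∑ i ∈ S j, g i j)]
  have hustar2 : c1 ≤ (u (istar j) j) ^ 2 := by
    have : umin ^ 2 ≤ (u (istar j) j) ^ 2 := by
      rw [← sq_abs (u (istar j) j)]
      exact pow_le_pow_left₀ humin.le hust 2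
    exact le_trans (min_le_left _ _) this
  have hgstar2 : c1 ≤ ‖g (istar j) j‖ ^ 2 := by
    have : gmin ^ 2 ≤ ‖g (istar j) j‖ ^ 2 := pow_le_pow_left₀ hgmin.le hgst 2
    exact le_trans (min_le_right _ _) this
  have hu2c2 : umax ^ 2 ≤ c2 := le_max_left _ _
  have hg2c2 : gmax ^ 2 ≤ c2 := le_max_right _ _
  have key : c1 * ((∑ i ∈ S j, u i j) ^ 2 + (w j) ^ 2 * ‖∑ i ∈ S j, g i j‖ ^ 2)
      ≤ c2 * (s : ℝ) ^ 2 * ((u (istar j) j) ^ 2 + (w j) ^ 2 * ‖g (istar j) j‖ ^ 2) := by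
    have h1 : c1 * (∑ i ∈ S j, u i j) ^ 2 ≤ c2 * (s : ℝ) ^ 2 * (u (istar j) j) ^ 2 :=
      calc c1 * (∑ i ∈ S j, u i j) ^ 2
          ≤ c1 * ((s : ℝ) ^ 2 * umax ^ 2) := mul_le_mul_of_nonneg_left hA2 hc1pos.le
        _ = (c1 * umax ^ 2) * (s : ℝ) ^ 2 := by ring
        _ ≤ ((u (istar j) j) ^ 2 * c2) * (s : ℝ) ^ 2 :=
            mul_le_mul_of_nonneg_right
              (mul_le_mul hustar2 hu2c2 (sq_nonneg umax) (sq_nonneg _)) (sq_nonneg _)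
        _ = c2 * (s : ℝ) ^ 2 * (u (istar j) j) ^ 2 := by ring
    have h2 : c1 * ((w j) ^ 2 * ‖∑ i ∈ S j, g i j‖ ^ 2)
        ≤ c2 * (s : ℝ) ^ 2 * ((w j) ^ 2 * ‖g (istar j) j‖ ^ 2) :=
      calc c1 * ((w j) ^ 2 * ‖∑ i ∈ S j, g i j‖ ^ 2)
          ≤ c1 * ((w j) ^ 2 * ((s : ℝ) ^ 2 * gmax ^ 2)) :=
            mul_le_mul_of_nonneg_left
              (mul_le_mul_of_nonneg_left hG2 (sq_nonneg _)) hc1pos.le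
        _ = (c1 * gmax ^ 2) * ((w j) ^ 2 * (s : ℝ) ^ 2) := by ring
        _ ≤ (‖g (istar j) j‖ ^ 2 * c2) * ((w j) ^ 2 * (s : ℝ) ^ 2) :=
            mul_le_mul_of_nonneg_right
              (mul_le_mul hgstar2 hg2c2 (sq_nonneg gmax) (sq_nonneg _))
              (mul_nonneg (sq_nonneg _) (sq_nonneg _))
        _ = c2 * (s : ℝ) ^ 2 * ((w j) ^ 2 * ‖g (istar j) j‖ ^ 2) := by ring
    linarith
  have hX : ((∑ i ∈ S j, u i j) ^ 2 + (w j) ^ 2 * ‖∑ i ∈ S j, g i j‖ ^ 2)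
      ≤ c2 * (s : ℝ) ^ 2 * ((u (istar j) j) ^ 2 + (w j) ^ 2 * ‖g (istar j) j‖ ^ 2) / c1 := by
    rw [le_div_iff₀ hc1pos]
    linarith
  have hfin : ((∑ i ∈ S j, u i j) ^ 2 + (w j) ^ 2 * ‖∑ i ∈ S j, g i j‖ ^ 2) / (T:ℝ)^2
      ≤ (c2 * (s : ℝ) ^ 2 * ((u (istar j) j) ^ 2 + (w j) ^ 2 * ‖g (istar j) j‖ ^ 2) / c1) / (T:ℝ)^2 := by
    gcongr
  calc ((1 / (T : ℝ)) * ∑ i ∈ S j, u i j) ^ 2 +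
        ((w j) ^ 2 / (T : ℝ) ^ 2) * ‖∑ i ∈ S j, g i j‖ ^ 2
      = ((∑ i ∈ S j, u i j) ^ 2 + (w j) ^ 2 * ‖∑ i ∈ S j, g i j‖ ^ 2) / (T:ℝ)^2 := by ring
    _ ≤ (c2 * (s : ℝ) ^ 2 * ((u (istar j) j) ^ 2 + (w j) ^ 2 * ‖g (istar j) j‖ ^ 2) / c1) / (T:ℝ)^2 := hfin
    _ = (c2 / c1) * ((s : ℝ) / (T : ℝ)) ^ 2 *
        ((u (istar j) j) ^ 2 + (w j) ^ 2 * ‖g (istar j) j‖ ^ 2) := by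
      field_simp
end

section
/- Let H be a real inner product space, let z : H → ℝ, y ∈ {−1, 1}, and θ ∈ H, and suppose z has gradient g at θ. Write m(θ') = y·z(θ') and suppose m is β-smooth in the sense that for all Δ ∈ H: m(θ + Δ) ≥ m(θ) + ⟪y·g, Δ⟫ − (β/2)·‖Δ‖², with β > 0. Let η ≥ 0 and set Δ = η·( y / (1 + exp(m(θ))) )·g (the SGD step on the logistic loss). Then m(θ + Δ) − m(θ) ≥ η·( ‖g‖² / (1 + exp(m(θ))) )·( 1 − β·η / (2·(1 + exp(m(θ)))) ). -/
/-! The logistic SGD step is `(η / (1 + exp m(θ))) • ∇m(θ)` with `∇m(θ) = y • g`, a plain gradient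
step on the margin, and `‖y • g‖ = ‖g‖` because `y = ±1`; the quadratic lower bound then gives
a gain of at least `c‖∇m‖²(1 - βc/2)` for a step of size `c`. -/

open scoped RealInnerProductSpace

theorem le_sub_of_lower_quadratic_bound_smul {H : Type*} [NormedAddCommGroup H]
    [InnerProductSpace ℝ H] {m : H → ℝ} {θ d : H} {β : ℝ}
    (hm : ∀ Δ : H, m (θ + Δ) ≥ m θ + ⟪d, Δ⟫ - (β / 2) * ‖Δ‖ ^ 2) (c : ℝ) :
    c * ‖d‖ ^ 2 * (1 - β * c / 2) ≤ m (θ + c • d) - m θ := by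
  have h := hm (c • d)
  rw [real_inner_smul_right, real_inner_self_eq_norm_sq, norm_smul, Real.norm_eq_abs,
    mul_pow, sq_abs] at h
  linarith

theorem norm_smul_of_eq_neg_one_or_eq_one {H : Type*} [SeminormedAddCommGroup H]
    [NormedSpace ℝ H] {y : ℝ} (hy : y = -1 ∨ y = 1) (g : H) : ‖y • g‖ = ‖g‖ := by
  rcases hy with rfl | rfl <;> simp

theorem stmt8_general {H : Type*} [NormedAddCommGroup H] [InnerProductSpace ℝ H]
    (z : H → ℝ) (θ g : H) (y : ℝ) (hy : y = -1 ∨ y = 1)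
    (β : ℝ)
    (hsmooth : ∀ Δ : H,
      y * z (θ + Δ) ≥ y * z θ + ⟪y • g, Δ⟫ - (β / 2) * ‖Δ‖ ^ 2)
    (η : ℝ)
    (Δ : H) (hΔ : Δ = η • ((y / (1 + Real.exp (y * z θ))) • g)) :
    y * z (θ + Δ) - y * z θ ≥
      η * (‖g‖ ^ 2 / (1 + Real.exp (y * z θ))) *
        (1 - β * η / (2 * (1 + Real.exp (y * z θ)))) := by
  set E := 1 + Real.exp (y * z θ)
  have hE : E ≠ 0 := by positivity
  have hstep : Δ = (η / E) • (y • g) := by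
    rw [hΔ, smul_smul, smul_smul, mul_div_assoc', div_mul_eq_mul_div]
  have hgain := le_sub_of_lower_quadratic_bound_smul (m := fun θ' => y * z θ') hsmooth (η / E)
  rw [norm_smul_of_eq_neg_one_or_eq_one hy, ← hstep] at hgain
  convert hgain using 1
  field_simp

/-- Bag-wise margin expansion under `β`-smoothness: if the signed margin
`m(θ') = y·z(θ')` satisfies `m(θ+Δ) ≥ m(θ) + ⟪y·g, Δ⟫ − (β/2)·‖Δ‖²` for all
`Δ` (with `g` the gradient of `z` at `θ`, `β > 0`), then the SGD step
`Δ = η·(y/(1+exp(m(θ))))·g` with `η ≥ 0` yields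
`m(θ+Δ) − m(θ) ≥ η·(‖g‖²/(1+exp(m(θ))))·(1 − β·η/(2·(1+exp(m(θ)))))`. -/
theorem stmt8 {H : Type*} [NormedAddCommGroup H] [InnerProductSpace ℝ H]
    (z : H → ℝ) (θ g : H) (y : ℝ) (hy : y = -1 ∨ y = 1)
    (β : ℝ) (hβ : 0 < β)
    (hsmooth : ∀ Δ : H,
      y * z (θ + Δ) ≥ y * z θ + ⟪y • g, Δ⟫ - (β / 2) * ‖Δ‖ ^ 2)
    (η : ℝ) (hη : 0 ≤ η)
    (Δ : H) (hΔ : Δ = η • ((y / (1 + Real.exp (y * z θ))) • g)) :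
    y * z (θ + Δ) - y * z θ ≥
      η * (‖g‖ ^ 2 / (1 + Real.exp (y * z θ))) *
        (1 - β * η / (2 * (1 + Real.exp (y * z θ)))) :=
  stmt8_general z θ g y hy β hsmooth η Δ hΔ
end

section
/- Let H be a real inner product space, let z : H → ℝ, y ∈ {−1, 1}, and θ ∈ H, and suppose z has gradient g at θ with g ≠ 0. Write m(θ') = y·z(θ') and suppose for all Δ ∈ H: m(θ + Δ) ≥ m(θ) + ⟪y·g, Δ⟫ − (β/2)·‖Δ‖², with β > 0. If 0 < η ≤ 2/β, then for the SGD step Δ = η·( y / (1 + exp(m(θ))) )·g one has m(θ + Δ) > m(θ); that is, a single logistic-loss SGD update with step size at most 2/β strictly increases the signed margin. -/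
open scoped RealInnerProductSpace

/-! The logistic SGD step is a gradient-ascent step `s • ∇m` on the margin with the effective step
size `s = η / (1 + exp m) < η ≤ 2 / β`, and the smoothness lower bound guarantees a gain of at least
`s ‖∇m‖² (1 - β s / 2) > 0`. -/

theorem lt_add_smul_of_quadratic_lower_bound {H : Type*} [NormedAddCommGroup H]
    [InnerProductSpace ℝ H] {f : H → ℝ} {x v : H} {β s : ℝ}
    (hf : ∀ Δ : H, f (x + Δ) ≥ f x + ⟪v, Δ⟫ - (β / 2) * ‖Δ‖ ^ 2)
    (hv : v ≠ 0) (hs : 0 < s) (hβs : β * s < 2) :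
    f x < f (x + s • v) := by
  have hgain : 0 < s * ‖v‖ ^ 2 * (1 - β * s / 2) := by
    have := norm_pos_iff.mpr hv
    have : 0 < 1 - β * s / 2 := by linarith
    positivity
  have hbound := hf (s • v)
  rw [real_inner_smul_right, real_inner_self_eq_norm_sq, norm_smul, Real.norm_eq_abs,
    abs_of_pos hs] at hbound
  linarith

/-- Strict margin increase under `β`-smoothness with step size `η ≤ 2/β`:
if `g ≠ 0`, the margin `m(θ') = y·z(θ')` is `β`-smooth, and `0 < η ≤ 2/β`,
then the logistic-loss SGD step `Δ = η·(y/(1+exp(m(θ))))·g` strictly increases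
the signed margin: `m(θ+Δ) > m(θ)`. -/
theorem stmt9 {H : Type*} [NormedAddCommGroup H] [InnerProductSpace ℝ H]
    (z : H → ℝ) (θ g : H) (y : ℝ) (hy : y = -1 ∨ y = 1) (hg : g ≠ 0)
    (β : ℝ) (hβ : 0 < β)
    (hsmooth : ∀ Δ : H,
      y * z (θ + Δ) ≥ y * z θ + ⟪y • g, Δ⟫ - (β / 2) * ‖Δ‖ ^ 2)
    (η : ℝ) (hη : 0 < η) (hη2 : η ≤ 2 / β)
    (Δ : H) (hΔ : Δ = η • ((y / (1 + Real.exp (y * z θ))) • g)) :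
    y * z (θ + Δ) > y * z θ := by
  set s := η / (1 + Real.exp (y * z θ))
  have hD : 1 < 1 + Real.exp (y * z θ) := lt_add_of_pos_right 1 (Real.exp_pos _)
  have hs : 0 < s := div_pos hη (by linarith)
  have hβs : β * s < 2 :=
    calc β * s < β * η := mul_lt_mul_of_pos_left (div_lt_self hη hD) hβ
      _ ≤ 2 := (le_div_iff₀' hβ).1 hη2
  have hstep : Δ = s • y • g := by
    rw [hΔ, smul_smul, smul_smul]
    congr 1
    ring
  have hyg : y • g ≠ 0 := smul_ne_zero (by rcases hy with rfl | rfl <;> norm_num) hg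
  rw [hstep]
  exact lt_add_smul_of_quadratic_lower_bound (f := fun x => y * z x) hsmooth hyg hs hβs
end
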